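/- (Sufficient decrease, inequality (10) in Theorem 1) Let ω ∈ (0,2), θ ≥ 0 and δ = 2θ/ω + ((2−ω)/ω)·minᵢ Dᵢᵢ. If z is a triangle-proximal point of x, then f(z) − f(x) ≤ −(δ/2)·‖z − x‖². -/

import Mathlib

open scoped RealInnerProductSpace
open Matrix Filter

noncomputable section

/-- Euclidean space ℝⁿ. -/
abbrev E (n : ℕ) := EuclideanSpace ℝ (Fin n)

/-- Matrix-vector multiplication, valued in Euclidean space. -/
def mulVecE {n : ℕ} (M : Matrix (Fin n) (Fin n) ℝ) (x : E n) : E n :=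
  (WithLp.equiv 2 (Fin n → ℝ)).symm (M.mulVec ((WithLp.equiv 2 (Fin n → ℝ)) x))

/-- Operator (spectral) norm of a matrix. -/
def opNorm {n : ℕ} (M : Matrix (Fin n) (Fin n) ℝ) : ℝ :=
  ‖Matrix.toEuclideanCLM (𝕜 := ℝ) M‖

/-- The diagonal part `D` of `A`. -/
def Dmat {n : ℕ} (A : Matrix (Fin n) (Fin n) ℝ) : Matrix (Fin n) (Fin n) ℝ :=
  Matrix.diagonal fun i => A i i

/-- The strictly lower triangular part `L` of `A`. -/
def Lmat {n : ℕ} (A : Matrix (Fin n) (Fin n) ℝ) : Matrix (Fin n) (Fin n) ℝ :=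
  Matrix.of fun i j => if (j : ℕ) < (i : ℕ) then A i j else 0

/-- `B = L + (1/ω)(D + θI)`. -/
def Bmat {n : ℕ} (ω θ : ℝ) (A : Matrix (Fin n) (Fin n) ℝ) : Matrix (Fin n) (Fin n) ℝ :=
  Lmat A + ω⁻¹ • (Dmat A + θ • (1 : Matrix (Fin n) (Fin n) ℝ))

/-- `C = Lᵀ + (1/ω)((ω−1)D − θI)`. -/
def Cmat {n : ℕ} (ω θ : ℝ) (A : Matrix (Fin n) (Fin n) ℝ) : Matrix (Fin n) (Fin n) ℝ :=
  (Lmat A)ᵀ + ω⁻¹ • ((ω - 1) • Dmat A - θ • (1 : Matrix (Fin n) (Fin n) ℝ))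

/-- `v` is a subgradient of `h` at `z`. -/
def IsSubgradient {n : ℕ} (h : E n → ℝ) (v z : E n) : Prop :=
  ∀ y, h z + ⟪v, y - z⟫ ≤ h y

/-- The composite objective `f(x) = (1/2)⟨x, Ax⟩ + ⟨b, x⟩ + h(x)`. -/
def fObj {n : ℕ} (A : Matrix (Fin n) (Fin n) ℝ) (b : E n) (h : E n → ℝ) (x : E n) : ℝ :=
  (1/2) * ⟪x, mulVecE A x⟫ + ⟪b, x⟫ + h x

/-- `z` is a triangle-proximal point of `x`: there is a subgradient `v` of `h` at `z`
with `Bz + b + Cx + v = 0`. -/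
def IsTriangleProx {n : ℕ} (ω θ : ℝ) (A : Matrix (Fin n) (Fin n) ℝ) (b : E n)
    (h : E n → ℝ) (x z : E n) : Prop :=
  ∃ v, IsSubgradient h v z ∧
    mulVecE (Bmat ω θ A) z + b + mulVecE (Cmat ω θ A) x + v = 0

/-! For any splitting `A = B + C` of a symmetric `A`, the optimality condition
`v = -(Bz + b + Cx)` and the subgradient inequality at `x` give
`f z - f x ≤ ½⟪z - x, (C - B)(z - x)⟫`. For the triangular splitting,
`C - B = Lᵀ - L + ω⁻¹((ω - 2)D - 2θI)`: the skew part `Lᵀ - L` has zero quadratic form and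
`D ≥ (minᵢ Dᵢᵢ) I`, so for `ω < 2` the form is at most `-δ‖z - x‖²`. -/

section Splitting

variable {V : Type*} [NormedAddCommGroup V] [InnerProductSpace ℝ V]

theorem quadratic_sub_sub_inner_eq {A B C : V →ₗ[ℝ] V} (hA : A.IsSymmetric) (hBC : B + C = A)
    (b x z : V) :
    (1 / 2) * ⟪z, A z⟫ + ⟪b, z⟫ - ((1 / 2) * ⟪x, A x⟫ + ⟪b, x⟫) - ⟪B z + b + C x, z - x⟫ =
      (1 / 2) * ⟪z - x, (C - B) (z - x)⟫ := by
  have hzx : ⟪x, A z⟫ = ⟪z, A x⟫ := by rw [← hA, real_inner_comm]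
  subst hBC
  rw [real_inner_comm (z - x), real_inner_comm z b, real_inner_comm x b]
  simp only [LinearMap.add_apply, LinearMap.sub_apply, map_sub, inner_add_right,
    inner_sub_right, inner_sub_left] at hzx ⊢
  linarith

theorem objective_sub_le_of_subgradient_splitting {A B C : V →ₗ[ℝ] V} (hA : A.IsSymmetric)
    (hBC : B + C = A) (b : V) (h : V → ℝ) {v x z : V} (hv : ∀ y, h z + ⟪v, y - z⟫ ≤ h y)
    (hopt : B z + b + C x + v = 0) :
    (1 / 2) * ⟪z, A z⟫ + ⟪b, z⟫ + h z - ((1 / 2) * ⟪x, A x⟫ + ⟪b, x⟫ + h x) ≤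
      (1 / 2) * ⟪z - x, (C - B) (z - x)⟫ := by
  have hv_eq : v = -(B z + b + C x) := eq_neg_of_add_eq_zero_right hopt
  have hsub : h z - h x ≤ -⟪B z + b + C x, z - x⟫ := by
    have hx := hv x
    rw [hv_eq, ← neg_sub z x, inner_neg_neg] at hx
    linarith
  linarith [quadratic_sub_sub_inner_eq hA hBC b x z]

end Splitting

theorem inner_toEuclideanLin_transpose_self {n : ℕ} (M : Matrix (Fin n) (Fin n) ℝ) (x : E n) :
    ⟪x, Mᵀ.toEuclideanLin x⟫ = ⟪x, M.toEuclideanLin x⟫ := by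
  rw [← conjTranspose_eq_transpose_of_trivial, toEuclideanLin_conjTranspose_eq_adjoint,
    LinearMap.adjoint_inner_right, real_inner_comm]

theorem iInf_mul_norm_sq_le_inner_diagonal {n : ℕ} (a : Fin n → ℝ) (x : E n) :
    (⨅ i, a i) * ‖x‖ ^ 2 ≤ ⟪x, (diagonal a).toEuclideanLin x⟫ := by
  have hquad : ⟪x, (diagonal a).toEuclideanLin x⟫ = ∑ i, a i * x i ^ 2 := by
    simp [PiLp.inner_apply, mulVec_diagonal, sq, mul_comm, mul_left_comm]
  rw [hquad, EuclideanSpace.real_norm_sq_eq, Finset.mul_sum]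
  gcongr with i
  exact ciInf_le (Set.finite_range a).bddBelow i

theorem Bmat_add_Cmat {n : ℕ} {ω : ℝ} (hω : ω ≠ 0) (θ : ℝ) {A : Matrix (Fin n) (Fin n) ℝ}
    (hA : A.IsSymm) : Bmat ω θ A + Cmat ω θ A = A := by
  ext i j
  simp only [Bmat, Cmat, Lmat, Dmat, Matrix.add_apply, Matrix.smul_apply, Matrix.sub_apply,
    transpose_apply, diagonal_apply, one_apply, of_apply, smul_eq_mul, Fin.val_fin_lt]
  rcases lt_trichotomy j i with hji | rfl | hij
  · simp [hji, hji.not_gt, hji.ne']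
  · simp
    field_simp
    ring
  · simp [hij, hij.not_gt, hij.ne, hA.apply i j]

theorem Cmat_sub_Bmat {n : ℕ} (ω θ : ℝ) (A : Matrix (Fin n) (Fin n) ℝ) :
    Cmat ω θ A - Bmat ω θ A = (Lmat A)ᵀ - Lmat A + ω⁻¹ • ((ω - 2) • Dmat A - (2 * θ) • 1) := by
  simp only [Cmat, Bmat]
  module

theorem inner_toEuclideanLin_Cmat_sub_Bmat_le {n : ℕ} {ω : ℝ} (hω : ω ∈ Set.Ioo (0 : ℝ) 2)
    (θ : ℝ) (A : Matrix (Fin n) (Fin n) ℝ) (d : E n) :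
    ⟪d, (Cmat ω θ A - Bmat ω θ A).toEuclideanLin d⟫ ≤
      -(2 * θ / ω + (2 - ω) / ω * ⨅ i, A i i) * ‖d‖ ^ 2 := by
  have hdiag : (⨅ i, A i i) * ‖d‖ ^ 2 ≤ ⟪d, (Dmat A).toEuclideanLin d⟫ :=
    iInf_mul_norm_sq_le_inner_diagonal _ d
  have hquad : ⟪d, (Cmat ω θ A - Bmat ω θ A).toEuclideanLin d⟫ =
      (2 * θ / ω) * -‖d‖ ^ 2 - (2 - ω) / ω * ⟪d, (Dmat A).toEuclideanLin d⟫ := by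
    simp only [Cmat_sub_Bmat, map_add, map_sub, map_smul, LinearMap.add_apply,
      LinearMap.sub_apply, LinearMap.smul_apply, inner_add_right, inner_sub_right,
      inner_smul_right, inner_toEuclideanLin_transpose_self]
    rw [toLpLin_one, LinearMap.id_apply, real_inner_self_eq_norm_sq]
    ring
  have hcoef : 0 ≤ (2 - ω) / ω := div_nonneg (by linarith [hω.2]) hω.1.le
  calc ⟪d, (Cmat ω θ A - Bmat ω θ A).toEuclideanLin d⟫
      ≤ (2 * θ / ω) * -‖d‖ ^ 2 - (2 - ω) / ω * ((⨅ i, A i i) * ‖d‖ ^ 2) := by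
        rw [hquad]; gcongr
    _ = -(2 * θ / ω + (2 - ω) / ω * ⨅ i, A i i) * ‖d‖ ^ 2 := by ring

theorem triangle_prox_sufficient_decrease_general {n : ℕ}
    (A : Matrix (Fin n) (Fin n) ℝ) (hA : A.IsSymm) (b : E n) (h : E n → ℝ)
    (ω θ : ℝ) (hω : ω ∈ Set.Ioo (0 : ℝ) 2)
    (δ : ℝ) (hδ : δ = 2 * θ / ω + (2 - ω) / ω * ⨅ i, A i i)
    (x z : E n) (hz : IsTriangleProx ω θ A b h x z) :
    fObj A b h z - fObj A b h x ≤ -(δ / 2) * ‖z - x‖ ^ 2 := by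
  obtain ⟨v, hv, hopt⟩ := hz
  have hsymm : A.toEuclideanLin.IsSymmetric :=
    isSymmetric_toEuclideanLin_iff.mpr (isHermitian_iff_isSymm.mpr hA)
  have hsplit : (Bmat ω θ A).toEuclideanLin + (Cmat ω θ A).toEuclideanLin = A.toEuclideanLin := by
    rw [← map_add, Bmat_add_Cmat hω.1.ne' θ hA]
  -- `mulVecE M` and `fObj` unfold definitionally to `M.toEuclideanLin` and its quadratic form.
  have hdecrease := objective_sub_le_of_subgradient_splitting hsymm hsplit b h hv hopt
  rw [← map_sub] at hdecrease
  have hquad := inner_toEuclideanLin_Cmat_sub_Bmat_le hω θ A (z - x)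
  rw [← hδ] at hquad
  calc fObj A b h z - fObj A b h x
      ≤ (1 / 2) * ⟪z - x, (Cmat ω θ A - Bmat ω θ A).toEuclideanLin (z - x)⟫ := hdecrease
    _ ≤ -(δ / 2) * ‖z - x‖ ^ 2 := by linarith

/-- sufficient decrease, inequality (10) in Theorem 1. -/
theorem triangle_prox_sufficient_decrease {n : ℕ} (hn : 0 < n)
    (A : Matrix (Fin n) (Fin n) ℝ) (hA : A.IsSymm) (b : E n) (h : E n → ℝ)
    (ω θ : ℝ) (hω : ω ∈ Set.Ioo (0 : ℝ) 2) (hθ : 0 ≤ θ)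
    (δ : ℝ) (hδ : δ = 2 * θ / ω + (2 - ω) / ω * ⨅ i, A i i)
    (x z : E n) (hz : IsTriangleProx ω θ A b h x z) :
    fObj A b h z - fObj A b h x ≤ -(δ / 2) * ‖z - x‖ ^ 2 :=
  triangle_prox_sufficient_decrease_general A hA b h ω θ hω δ hδ x z hz
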